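/- For every p ∈ (0,1) and every ω ∈ ℂ with |ω| < 1, the limit as N → ∞ of ((1−p)^N / ∏_{n=1}^N (2^n − 1)) · det B_N(p; c_0, …, c_N), where c_0 = 0 and c_j = ω^j / j for 1 ≤ j ≤ N, exists and equals −∫_0^1 Log(1 − ωx) dμ_p(x), where Log denotes the principal branch of the complex logarithm. -/

import Mathlib

/-
The first binary digit of a `μ_p`-random point is independent of the remaining ones, which are
again `μ_p`-distributed; hence `μ_p = p • (x ↦ x/2)_* μ_p + (1-p) • (x ↦ (1+x)/2)_* μ_p`, and
the moments `m_n = ∫ x^n dμ_p` satisfy `(2^n - 1) m_n = (1-p) ∑_{k<n} C(n,k) m_k`. This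
recurrence says exactly that `(m_0, …, m_N)` is annihilated by the first `N` rows of `B_N`, so
`det B_N` depends on the last row `c` only through `∑ c_j m_j`; for `c = e_0`, expanding along
the last row leaves a triangular minor, whence `det B_N = (∑ c_j m_j) ∏ (2^n - 1) / (1-p)^N`.
The normalised determinant is therefore the partial sum `∑_{j ≤ N} ω^j m_j / j` of
`∫ ∑_j (ωx)^j / j dμ_p = -∫ Log(1 - ωx) dμ_p`.
-/

open MeasureTheory

/-- The probability measure on `{0,1}` (encoded as `Bool`, `false` ↔ digit `0`,
`true` ↔ digit `1`) giving mass `p` to the digit `0` and mass `1 - p` to the digit `1`. -/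
noncomputable def bernoulliBool (p : ℝ) : Measure Bool :=
  ENNReal.ofReal p • Measure.dirac false + ENNReal.ofReal (1 - p) • Measure.dirac true

/-- `ν` is the infinite product, over `n ≥ 1` (indexed here by `ℕ`, where index `n`
stands for the digit `n+1`), of the Bernoulli measures `bernoulliBool p`:
it is characterized as the projective limit of the finite product measures. -/
def IsBernoulliProduct (p : ℝ) (ν : Measure (ℕ → Bool)) : Prop :=
  IsProjectiveLimit ν fun J : Finset ℕ => Measure.pi fun _ : J => bernoulliBool p

/-- The binary expansion map sending a 0-1 sequence `(x_n)_{n ≥ 1}` to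
`∑_{n=1}^∞ x_n 2^{-n}` (index `n : ℕ` stands for the digit `n+1`). -/
noncomputable def binExpand (x : ℕ → Bool) : ℝ :=
  ∑' n : ℕ, if x n then ((2 : ℝ) ^ (n + 1))⁻¹ else 0

/-- `μ` is the Bernoulli measure `μ_p` on `ℝ`: the pushforward under the binary
expansion map of the infinite product of Bernoulli measures on `{0,1}`. -/
def IsBernoulliMeasure (p : ℝ) (μ : Measure ℝ) : Prop :=
  ∃ ν : Measure (ℕ → Bool), IsBernoulliProduct p ν ∧ μ = ν.map binExpand

/-- The `(N+1) × (N+1)` complex Hessenberg matrix `B_N(p; c_0, …, c_N)` (1-indexed in the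
paper, 0-indexed here): for `0 ≤ i < N` the row `i` (paper row `i+1`) has entries
`C(i+1, j)` for `j ≤ i`, the entry `(1 - 2^{i+1})/(1-p)` at column `j = i+1`, and `0`
for `j > i+1`; the last row (row `N`) is `(c_0, c_1, …, c_N)`. -/
noncomputable def Bmat (N : ℕ) (p : ℝ) (c : Fin (N + 1) → ℂ) :
    Matrix (Fin (N + 1)) (Fin (N + 1)) ℂ := fun i j =>
  if (i : ℕ) < N then
    if (j : ℕ) ≤ (i : ℕ) then (Nat.choose ((i : ℕ) + 1) (j : ℕ) : ℂ)
    else if (j : ℕ) = (i : ℕ) + 1 then (1 - 2 ^ ((i : ℕ) + 1)) / (1 - (p : ℂ))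
    else 0
  else c j

open Measure Finset ProbabilityTheory

def natCons {α : Type*} (a : α) (x : ℕ → α) : ℕ → α
  | 0 => a
  | n + 1 => x n

section natCons

variable {α : Type*}

@[simp] lemma natCons_zero (a : α) (x : ℕ → α) : natCons a x 0 = a := rfl

@[simp] lemma natCons_succ (a : α) (x : ℕ → α) (n : ℕ) : natCons a x (n + 1) = x n := rfl

lemma prod_eq_ite_mul_prod_preimage_succ {M : Type*} [CommMonoid M] (s : Finset ℕ) (f : ℕ → M) :
    ∏ n ∈ s, f n =
      (if 0 ∈ s then f 0 else 1) *
        ∏ n ∈ s.preimage Nat.succ Nat.succ_injective.injOn, f (n + 1) := by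
  classical
  rw [prod_preimage' Nat.succ, ← prod_filter_mul_prod_filter_not s (· ∈ Set.range Nat.succ),
    mul_comm]
  congr 1
  have : ∀ n, n ∉ Set.range Nat.succ ↔ n = 0 := fun n => by
    cases n <;> simp
  simp only [this, filter_eq']
  split_ifs <;> simp

lemma preimage_natCons_pi (s : Finset ℕ) (t : ℕ → Set α) :
    (fun q : α × (ℕ → α) => natCons q.1 q.2) ⁻¹' (s : Set ℕ).pi t =
      (if 0 ∈ s then t 0 else Set.univ) ×ˢ
        (s.preimage Nat.succ Nat.succ_injective.injOn : Set ℕ).pi (fun n => t (n + 1)) := by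
  ext ⟨a, x⟩
  simp only [Set.mem_preimage, Set.mem_pi, mem_coe, Set.mem_prod, mem_preimage]
  constructor
  · intro h
    refine ⟨?_, fun n hn => h (n + 1) hn⟩
    split_ifs with h0
    · exact h 0 h0
    · trivial
  · rintro ⟨ha, hx⟩ (_ | n) hn
    · simpa [hn] using ha
    · exact hx n hn

variable [MeasurableSpace α]

lemma measurable_natCons : Measurable fun q : α × (ℕ → α) => natCons q.1 q.2 := by
  refine measurable_pi_lambda _ fun n => ?_
  cases n with
  | zero => exact measurable_fst
  | succ n => exact (measurable_pi_apply n).comp measurable_snd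

theorem map_natCons_prod_infinitePi (β : Measure α) [IsProbabilityMeasure β] :
    (β.prod (infinitePi fun _ : ℕ => β)).map (fun q => natCons q.1 q.2) =
      infinitePi fun _ => β := by
  refine eq_infinitePi _ fun s t ht => ?_
  rw [map_apply measurable_natCons (.pi s.countable_toSet fun i _ => ht i),
    preimage_natCons_pi, prod_prod, infinitePi_pi _ fun i _ => ht (i + 1),
    prod_eq_ite_mul_prod_preimage_succ s]
  split_ifs <;> simp

end natCons

section Bernoulli

variable {p : ℝ}

lemma isProbabilityMeasure_bernoulliBool (hp : p ∈ Set.Icc 0 1) :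
    IsProbabilityMeasure (bernoulliBool p) := by
  constructor
  simp [bernoulliBool, ← ENNReal.ofReal_add hp.1 (sub_nonneg.2 hp.2)]

lemma IsBernoulliProduct.eq_infinitePi (hp : p ∈ Set.Icc 0 1) {ν : Measure (ℕ → Bool)}
    (hν : IsBernoulliProduct p ν) : ν = infinitePi fun _ => bernoulliBool p :=
  have := isProbabilityMeasure_bernoulliBool hp
  hν.unique (isProjectiveLimit_infinitePi _)

end Bernoulli

section binExpand

lemma binExpand_summand_le (x : ℕ → Bool) (n : ℕ) :
    (if x n then ((2 : ℝ) ^ (n + 1))⁻¹ else 0) ≤ (1 / 2) ^ (n + 1) := by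
  split_ifs <;> simp

lemma summable_binExpand (x : ℕ → Bool) :
    Summable fun n => if x n then ((2 : ℝ) ^ (n + 1))⁻¹ else 0 :=
  .of_nonneg_of_le (fun n => by positivity) (binExpand_summand_le x)
    (summable_geometric_two.comp_injective (add_left_injective 1) |>.congr fun n => by simp)

lemma binExpand_mem_Icc (x : ℕ → Bool) : binExpand x ∈ Set.Icc 0 1 := by
  refine ⟨tsum_nonneg fun n => by positivity, ?_⟩
  calc binExpand x ≤ ∑' n : ℕ, ((1 : ℝ) / 2) ^ (n + 1) :=
        (summable_binExpand x).tsum_le_tsum (binExpand_summand_le x)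
          (summable_geometric_two.comp_injective (add_left_injective 1))
    _ = 1 := by simp only [pow_succ, tsum_mul_right, tsum_geometric_two]; norm_num

lemma measurable_binExpand : Measurable binExpand :=
  .tsum fun n => Measurable.ite (measurableSet_eq_fun (measurable_pi_apply n) measurable_const)
    measurable_const measurable_const

lemma binExpand_natCons (b : Bool) (x : ℕ → Bool) :
    binExpand (natCons b x) = ((if b then 1 else 0) + binExpand x) / 2 := by
  rw [binExpand, (summable_binExpand _).tsum_eq_zero_add, binExpand, add_div, ← tsum_div_const]
  congr 1
  · cases b <;> norm_num
  · congr 1 with n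
    rw [natCons_succ, ite_div, zero_div, pow_succ _ (n + 1), mul_inv, div_eq_mul_inv]

end binExpand

section BernoulliMeasure

variable {p : ℝ} {μ : Measure ℝ}

lemma IsBernoulliMeasure.isProbabilityMeasure (hp : p ∈ Set.Icc 0 1)
    (hμ : IsBernoulliMeasure p μ) : IsProbabilityMeasure μ := by
  obtain ⟨ν, hν, rfl⟩ := hμ
  have := isProbabilityMeasure_bernoulliBool hp
  have := hν.isProbabilityMeasure
  exact isProbabilityMeasure_map measurable_binExpand.aemeasurable

lemma IsBernoulliMeasure.ae_mem_Icc (hμ : IsBernoulliMeasure p μ) : ∀ᵐ x ∂μ, x ∈ Set.Icc 0 1 := by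
  obtain ⟨ν, -, rfl⟩ := hμ
  exact (ae_map_iff measurable_binExpand.aemeasurable measurableSet_Icc).2
    (ae_of_all _ binExpand_mem_Icc)

theorem IsBernoulliMeasure.self_similar (hp : p ∈ Set.Icc 0 1) (hμ : IsBernoulliMeasure p μ) :
    μ = ENNReal.ofReal p • μ.map (· / 2) +
      ENNReal.ofReal (1 - p) • μ.map (fun x => (1 + x) / 2) := by
  obtain ⟨ν, hν, rfl⟩ := hμ
  have := isProbabilityMeasure_bernoulliBool hp
  have := hν.isProbabilityMeasure
  have hcons : ((bernoulliBool p).prod ν).map (fun q => natCons q.1 q.2) = ν := by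
    rw [hν.eq_infinitePi hp]
    exact map_natCons_prod_infinitePi _
  have hm := measurable_binExpand.comp (measurable_natCons (α := Bool))
  have hdigit (b : Bool) : (binExpand ∘ fun q => natCons q.1 q.2) ∘ Prod.mk b =
      (fun x => ((if b then 1 else 0) + x) / 2) ∘ binExpand :=
    funext (binExpand_natCons b)
  conv_lhs => rw [← hcons, map_map measurable_binExpand measurable_natCons, bernoulliBool,
    add_prod, prod_smul_left, prod_smul_left, dirac_prod, dirac_prod, Measure.map_add _ _ hm,
    Measure.map_smul, Measure.map_smul, map_map hm measurable_prodMk_left,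
    map_map hm measurable_prodMk_left, hdigit, hdigit,
    ← map_map (by fun_prop) measurable_binExpand, ← map_map (by fun_prop) measurable_binExpand]
  simp

end BernoulliMeasure

section Moments

variable {μ : Measure ℝ}

lemma integrable_pow_of_ae_mem_Icc [IsFiniteMeasure μ] (hμ : ∀ᵐ x ∂μ, x ∈ Set.Icc (0 : ℝ) 1)
    (n : ℕ) : Integrable (fun x => x ^ n) μ :=
  .of_bound (by fun_prop) 1 (hμ.mono fun x hx => by
    rw [norm_pow, Real.norm_of_nonneg hx.1]; exact pow_le_one₀ hx.1 hx.2)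

theorem moment_recurrence_of_self_similar {p : ℝ} [IsFiniteMeasure μ] (hp : p ∈ Set.Icc 0 1)
    (hμ : ∀ᵐ x ∂μ, x ∈ Set.Icc 0 1)
    (hss : μ = ENNReal.ofReal p • μ.map (· / 2) +
      ENNReal.ofReal (1 - p) • μ.map (fun x => (1 + x) / 2)) (n : ℕ) :
    (2 ^ n - 1) * moment id n μ = (1 - p) * ∑ k ∈ range n, n.choose k * moment id k μ := by
  have hint := integrable_pow_of_ae_mem_Icc hμ
  have hi : Integrable (fun x => x ^ n) (ENNReal.ofReal p • μ.map (· / 2) +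
      ENNReal.ofReal (1 - p) • μ.map (fun x => (1 + x) / 2)) := hss ▸ hint n
  have hsplit : moment id n μ = p * (moment id n μ / 2 ^ n) +
      (1 - p) * ((∑ k ∈ range (n + 1), n.choose k * moment id k μ) / 2 ^ n) := by
    calc moment id n μ = ∫ x, x ^ n ∂(ENNReal.ofReal p • μ.map (· / 2) +
          ENNReal.ofReal (1 - p) • μ.map (fun x => (1 + x) / 2)) := by
          rw [moment_def, ← hss]; rfl
      _ = p * ∫ x, (x / 2) ^ n ∂μ + (1 - p) * ∫ x, ((1 + x) / 2) ^ n ∂μ := by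
          rw [integral_add_measure hi.left_of_add_measure hi.right_of_add_measure,
            integral_smul_measure, integral_smul_measure, integral_map (by fun_prop) (by fun_prop),
            integral_map (by fun_prop) (by fun_prop), ENNReal.toReal_ofReal hp.1,
            ENNReal.toReal_ofReal (sub_nonneg.2 hp.2), smul_eq_mul, smul_eq_mul]
      _ = _ := by
          simp_rw [div_pow, add_comm (1 : ℝ), add_pow, one_pow, mul_one]
          rw [integral_div, integral_div, integral_finsetSum _ fun k _ => (hint k).mul_const _]
          simp_rw [integral_mul_const, moment_def, Pi.pow_apply, id_eq, mul_comm]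
  rw [sum_range_succ, Nat.choose_self, Nat.cast_one, one_mul] at hsplit
  field_simp at hsplit
  linear_combination hsplit

end Moments

section LogSeries

variable {μ : Measure ℝ}

theorem hasSum_moment_eq_neg_integral_log [IsFiniteMeasure μ]
    (hμ : ∀ᵐ x ∂μ, x ∈ Set.Icc (0 : ℝ) 1) {ω : ℂ} (hω : ‖ω‖ < 1) :
    HasSum (fun n : ℕ => ω ^ n / n * moment id n μ) (-∫ x, Complex.log (1 - ω * x) ∂μ) := by
  have hnorm : ∀ᵐ x : ℝ ∂μ, ‖ω * x‖ ≤ ‖ω‖ := hμ.mono fun x hx => by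
    rw [norm_mul, Complex.norm_real, Real.norm_of_nonneg hx.1]
    exact mul_le_of_le_one_right (norm_nonneg ω) hx.2
  have hterm (n : ℕ) : ∫ x, (ω * x) ^ n / n ∂μ = ω ^ n / n * moment id n μ := by
    simp_rw [mul_pow, mul_div_right_comm, integral_const_mul, moment_def, Pi.pow_apply, id_eq,
      ← integral_complex_ofReal, Complex.ofReal_pow]
  simp_rw [← hterm, ← integral_neg]
  refine hasSum_integral_of_dominated_convergence (fun n _ => ‖ω‖ ^ n) (fun n => by fun_prop)
    (fun n => hnorm.mono fun x hx => ?_) (ae_of_all _ fun _ => summable_geometric_of_lt_one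
      (norm_nonneg ω) hω) (integrable_const _)
    (hnorm.mono fun x hx => Complex.hasSum_taylorSeries_neg_log (hx.trans_lt hω))
  rw [norm_div, norm_pow, Complex.norm_natCast]
  calc ‖ω * x‖ ^ n / n ≤ ‖ω * x‖ ^ n := div_nat_le_self_of_nonnneg (by positivity) n
    _ ≤ ‖ω‖ ^ n := pow_le_pow_left₀ (norm_nonneg _) hx n

end LogSeries

open Matrix

theorem Matrix.det_updateRow_eq_dotProduct_mul {R n : Type*} [CommRing R] [IsDomain R] [Fintype n]
    [DecidableEq n] (A : Matrix n n R) {i j : n} {v : n → R} (hv : v j = 1)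
    (hA : ∀ k ≠ i, (A *ᵥ v) k = 0) (c : n → R) :
    (A.updateRow i c).det = (c ⬝ᵥ v) * (A.updateRow i (Pi.single j 1)).det := by
  set s := c ⬝ᵥ v
  have hsing : (A.updateRow i (c - s • Pi.single j 1)).det = 0 := by
    rw [← exists_mulVec_eq_zero_iff]
    refine ⟨v, fun h => by simpa [hv] using congrFun h j, funext fun k => ?_⟩
    rcases eq_or_ne k i with rfl | hk
    · rw [mulVec, updateRow_self, sub_dotProduct, smul_dotProduct, single_one_dotProduct, hv,
        smul_eq_mul, mul_one, sub_self, Pi.zero_apply]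
    · simpa [mulVec, updateRow_ne hk] using hA k hk
  calc (A.updateRow i c).det
      = (A.updateRow i ((c - s • Pi.single j 1) + s • Pi.single j 1)).det := by
        rw [sub_add_cancel]
    _ = s * (A.updateRow i (Pi.single j 1)).det := by
        rw [det_updateRow_add, det_updateRow_smul, hsing, zero_add]

section Bmat

variable {N : ℕ} {p : ℝ}

lemma Bmat_updateRow_last (c d : Fin (N + 1) → ℂ) :
    (Bmat N p c).updateRow (Fin.last N) d = Bmat N p d := by
  ext i j
  rcases eq_or_ne i (Fin.last N) with rfl | hi
  · simp [Bmat]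
  · simp [updateRow_ne hi, Bmat, Fin.val_lt_last hi]

lemma Bmat_mulVec_eq_zero {M : ℕ → ℂ} (hp : (1 : ℂ) - p ≠ 0)
    (hM : ∀ n, (2 ^ n - 1) * M n = (1 - p) * ∑ k ∈ range n, n.choose k * M k)
    (c : Fin (N + 1) → ℂ) {i : Fin (N + 1)} (hi : i ≠ Fin.last N) :
    (Bmat N p c *ᵥ fun j => M j) i = 0 := by
  have hiN : (i : ℕ) < N := Fin.val_lt_last hi
  set F : ℕ → ℂ := fun j => (if j ≤ i then ((i + 1 : ℕ).choose j : ℂ)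
    else if j = i + 1 then (1 - 2 ^ ((i : ℕ) + 1)) / (1 - (p : ℂ)) else 0) * M j
  calc (Bmat N p c *ᵥ fun j => M j) i = ∑ j ∈ range (N + 1), F j := by
        simp only [mulVec, dotProduct, Bmat, if_pos hiN]
        exact Fin.sum_univ_eq_sum_range F (N + 1)
    _ = ∑ j ∈ range (i + 2), F j :=
        (sum_subset (range_subset_range.2 (by omega)) fun j _ hj => by
          simp only [mem_range] at hj
          simp [F, show ¬j ≤ i by omega, show j ≠ i + 1 by omega]).symm
    _ = ∑ j ∈ range (i + 1), ((i + 1 : ℕ).choose j : ℂ) * M j +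
          (1 - 2 ^ ((i : ℕ) + 1)) / (1 - (p : ℂ)) * M (i + 1) := by
        rw [sum_range_succ]
        congr 1
        · exact sum_congr rfl fun j hj => by simp [F, Nat.lt_succ_iff.1 (mem_range.1 hj)]
        · simp [F]
    _ = 0 := by
        have := hM (i + 1)
        field_simp
        linear_combination -this

lemma det_Bmat_single_zero :
    (Bmat N p (Pi.single 0 1)).det = (∏ n ∈ range N, ((2 : ℂ) ^ (n + 1) - 1)) / (1 - p) ^ N := by
  rw [det_succ_row _ (Fin.last N), Fintype.sum_eq_single 0 fun j hj => by simp [Bmat, hj],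
    Fin.succAbove_last, Fin.succAbove_zero, det_of_isLowerTriangular]
  · simp [Bmat, Fin.prod_univ_eq_prod_range (fun n => (1 - (2 : ℂ) ^ (n + 1)) / (1 - p)) N]
    rw [← mul_div_assoc, ← prod_congr rfl fun n _ => neg_sub (1 : ℂ) (2 ^ (n + 1)), prod_neg,
      card_range]
  · intro a b (hab : a < b)
    simp [Bmat, hab.not_gt, Fin.val_ne_of_ne hab.ne']

lemma mul_det_Bmat_eq_sum {M : ℕ → ℂ} (hp : (1 : ℂ) - p ≠ 0) (hM0 : M 0 = 1)
    (hM : ∀ n, (2 ^ n - 1) * M n = (1 - p) * ∑ k ∈ range n, n.choose k * M k)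
    (c : Fin (N + 1) → ℂ) :
    (1 - (p : ℂ)) ^ N / (∏ n ∈ range N, ((2 : ℂ) ^ (n + 1) - 1)) * (Bmat N p c).det =
      ∑ j, c j * M j := by
  have hprod : ∏ n ∈ range N, ((2 : ℂ) ^ (n + 1) - 1) ≠ 0 := prod_ne_zero_iff.2 fun n _ =>
    sub_ne_zero.2 (by exact_mod_cast (Nat.one_lt_two_pow n.succ_ne_zero).ne')
  rw [← Bmat_updateRow_last c c, det_updateRow_eq_dotProduct_mul _ (j := 0)
      (v := fun j : Fin (N + 1) => M j) hM0 fun k hk => Bmat_mulVec_eq_zero hp hM c hk,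
    Bmat_updateRow_last, det_Bmat_single_zero]
  field_simp
  rfl

end Bmat

open Filter in
/-- For `p ∈ (0,1)` and `ω ∈ ℂ` with `|ω| < 1`,
`((1-p)^N / ∏_{n=1}^N (2^n-1)) · det B_N(p; 0, ω, ω²/2, …, ω^N/N)
  → -∫_0^1 Log(1 - ωx) dμ_p(x)` as `N → ∞`, with `Log` the principal logarithm. -/
theorem stmt16 (p : ℝ) (hp : p ∈ Set.Ioo (0 : ℝ) 1) (μ : Measure ℝ)
    (hμ : IsBernoulliMeasure p μ) (ω : ℂ) (hω : ‖ω‖ < 1) :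
    Tendsto
      (fun N : ℕ =>
        (1 - (p : ℂ)) ^ N / (∏ n ∈ Finset.range N, ((2 : ℂ) ^ (n + 1) - 1)) *
          (Bmat N p fun j =>
            if (j : ℕ) = 0 then 0 else ω ^ (j : ℕ) / ((j : ℕ) : ℂ)).det)
      atTop
      (nhds (-∫ x in Set.Icc (0 : ℝ) 1, Complex.log (1 - ω * x) ∂μ)) := by
  have hp' : p ∈ Set.Icc 0 1 := Set.Ioo_subset_Icc_self hp
  have := hμ.isProbabilityMeasure hp'
  have hsupp := hμ.ae_mem_Icc
  have hrec (n : ℕ) : (2 ^ n - 1) * (moment id n μ : ℂ) =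
      (1 - p) * ∑ k ∈ range n, n.choose k * (moment id k μ : ℂ) := by
    exact_mod_cast moment_recurrence_of_self_similar hp' hsupp (hμ.self_similar hp') n
  rw [Measure.restrict_eq_self_of_ae_mem hsupp]
  refine ((hasSum_moment_eq_neg_integral_log hsupp hω).tendsto_sum_nat.comp
    (tendsto_add_atTop_nat 1)).congr fun N => ?_
  rw [mul_det_Bmat_eq_sum (by exact_mod_cast (sub_pos.2 hp.2).ne') (by simp [moment]) hrec,
    Function.comp_apply, ← Fin.sum_univ_eq_sum_range]
  congr with j
  -- the `j = 0` entry `0` agrees with `ω ^ 0 / 0`, which is `0` in Lean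
  split_ifs with hj <;> simp [hj]
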